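/- Let γ ∈ N be injective. Then there exists ε > 0 such that every γ̃ ∈ N with ‖γ̃ − γ‖ < ε is also injective. In other words, the set of injective unit-speed C¹ loops is open in N for the C¹ topology. -/

import Mathlib

/-- `Γ`: the space of `C¹` loops `γ : ℝ/ℤ → ℝ²`, seen as 1-periodic `C¹` maps `ℝ → ℝ²`. -/
def InGamma (γ : ℝ → EuclideanSpace ℝ (Fin 2)) : Prop :=
  ContDiff ℝ 1 γ ∧ Function.Periodic γ 1

/-- The distance on `Γ` induced by the C¹ norm `‖γ‖ = ‖γ‖_∞ + ‖γ'‖_∞`. -/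
noncomputable def dC1 (γ₁ γ₂ : ℝ → EuclideanSpace ℝ (Fin 2)) : ℝ :=
  (⨆ t : ℝ, dist (γ₁ t) (γ₂ t)) + (⨆ t : ℝ, dist (deriv γ₁ t) (deriv γ₂ t))

/-- `N`: the set of unit-speed parametrizations in `Γ`. -/
def InN (γ : ℝ → EuclideanSpace ℝ (Fin 2)) : Prop :=
  InGamma γ ∧ ∀ t : ℝ, ‖deriv γ t‖ = 1

/-- Injectivity of a 1-periodic loop as a map on the circle `ℝ/ℤ`. -/
def InjLoop (γ : ℝ → EuclideanSpace ℝ (Fin 2)) : Prop :=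
  ∀ s t : ℝ, γ s = γ t → ∃ k : ℤ, s - t = (k : ℝ)

/-!
Near the diagonal: the velocity of `γ`, continuous and periodic, is uniformly continuous, so on
parameter windows of some length `δ` it stays within `1/4` of its initial unit vector `v`; a
`C¹`-close loop `γ'` then has velocity within `1/2` of `v` there, and the mean value inequality
forbids `γ' a = γ' b` for `0 < b - a ≤ δ`. Away from the diagonal, compactness gives `m > 0` with
`m ≤ dist (γ t) (γ (t + r))` for `δ ≤ r ≤ 1 - δ`, and moving every point by less than `m / 2`
keeps these pairs apart.
-/

open Function Set

local notation "ℝ²" => EuclideanSpace ℝ (Fin 2)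

namespace Function.Periodic

variable {c : ℝ}

theorem uniformContinuous_of_continuous {α : Type*} [UniformSpace α] {f : ℝ → α}
    (hp : Periodic f c) (hc : 0 < c) (hf : Continuous f) : UniformContinuous f := by
  have : Fact (0 < c) := ⟨hc⟩
  have hlift : Continuous (hp.lift : AddCircle c → α) := continuous_coinduced_dom.mpr hf
  have hmk : UniformContinuous ((↑) : ℝ → AddCircle c) :=
    (QuotientAddGroup.mk' _).uniformContinuous_of_continuousAt_zero
      continuous_quotient_mk'.continuousAt
  exact (CompactSpace.uniformContinuous_of_continuous hlift).comp hmk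

theorem deriv {F : Type*} [NormedAddCommGroup F] [NormedSpace ℝ F] {f : ℝ → F}
    (hp : Periodic f c) : Periodic (_root_.deriv f) c := fun t => by
  rw [← deriv_comp_add_const, funext hp]

theorem dist_le_iSup_dist {α : Type*} [PseudoMetricSpace α] {f g : ℝ → α} (hf : Periodic f c)
    (hg : Periodic g c) (hc : c ≠ 0) (hfc : Continuous f) (hgc : Continuous g) (t : ℝ) :
    dist (f t) (g t) ≤ ⨆ t, dist (f t) (g t) := by
  have hp : Periodic (fun t => dist (f t) (g t)) c := fun t => congrArg₂ dist (hf t) (hg t)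
  exact le_ciSup (hp.isBounded_of_continuous hc (hfc.dist hgc)).bddAbove t

end Function.Periodic

section NormedSpace

variable {F : Type*} [NormedAddCommGroup F] [NormedSpace ℝ F]

theorem apply_ne_of_norm_deriv_sub_le {f : ℝ → F} (hf : Differentiable ℝ f) {a b : ℝ}
    (hab : a < b) {v : F} {C : ℝ} (hC : C < ‖v‖) (hv : ∀ u ∈ Icc a b, ‖deriv f u - v‖ ≤ C) :
    f b ≠ f a := by
  intro heq
  -- the mean value inequality for `u ↦ f u - u • v` gives `‖(b - a) • v‖ ≤ C * (b - a)`
  have hmvt := norm_image_sub_le_of_norm_deriv_le_segment' (f := fun u => f u - u • v)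
    (fun u _ => ((hf u).hasDerivAt.sub ((hasDerivAt_id u).smul_const v)).hasDerivWithinAt)
    (fun u hu => by simpa using hv u (Ico_subset_Icc_self hu)) b (right_mem_Icc.2 hab.le)
  rw [heq, sub_sub_sub_cancel_left, ← sub_smul, norm_smul, Real.norm_eq_abs, abs_sub_comm,
    abs_of_pos (sub_pos.2 hab)] at hmvt
  nlinarith

theorem exists_pos_apply_ne_of_dist_deriv_le {f : ℝ → F} (hf : UniformContinuous (deriv f))
    (hunit : ∀ t, ‖deriv f t‖ = 1) :
    ∃ δ > 0, ∀ g : ℝ → F, Differentiable ℝ g → (∀ t, dist (deriv g t) (deriv f t) ≤ 1 / 4) →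
      ∀ a b, a < b → b ≤ a + δ → g b ≠ g a := by
  obtain ⟨δ, hδ, hmod⟩ := Metric.uniformContinuous_iff_le.1 hf (1 / 4) (by norm_num)
  refine ⟨δ, hδ, fun g hg hclose a b hab hba => ?_⟩
  refine apply_ne_of_norm_deriv_sub_le hg hab (v := deriv f a) (C := 1 / 2)
    (by rw [hunit]; norm_num) fun u hu => ?_
  have hua : dist u a ≤ δ := by
    rw [Real.dist_eq, abs_of_nonneg (sub_nonneg.2 hu.1)]
    linarith [hu.2]
  calc ‖deriv g u - deriv f a‖ ≤ dist (deriv g u) (deriv f u) + dist (deriv f u) (deriv f a) :=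
        dist_eq_norm (deriv g u) (deriv f a) ▸ dist_triangle _ _ _
    _ ≤ 1 / 4 + 1 / 4 := add_le_add (hclose u) (hmod hua)
    _ = 1 / 2 := by norm_num

end NormedSpace

theorem InjLoop.apply_add_ne {γ : ℝ → ℝ²} (hinj : InjLoop γ) (t : ℝ) {r : ℝ} (hr₀ : 0 < r)
    (hr₁ : r < 1) : γ (t + r) ≠ γ t := by
  intro heq
  obtain ⟨k, hk⟩ := hinj _ _ heq
  rw [add_sub_cancel_left] at hk
  have h₀ : (0 : ℤ) < k := by exact_mod_cast hk ▸ hr₀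
  have h₁ : k < 1 := by exact_mod_cast hk ▸ hr₁
  omega

theorem injLoop_of_apply_add_ne {γ : ℝ → ℝ²} (hp : Periodic γ 1)
    (h : ∀ t r, 0 < r → r < 1 → γ (t + r) ≠ γ t) : InjLoop γ := by
  intro s t heq
  refine ⟨⌊s - t⌋, ?_⟩
  by_contra hne
  have hfract : 0 < Int.fract (s - t) :=
    (Int.fract_nonneg _).lt_of_ne' fun h0 => hne (by linarith [Int.fract_add_floor (s - t)])
  refine h t _ hfract (Int.fract_lt_one _) ?_
  rw [← heq, Int.fract, show t + (s - t - ⌊s - t⌋) = s - ⌊s - t⌋ * 1 by ring,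
    hp.sub_int_mul_eq]

theorem InjLoop.exists_pos_le_dist {γ : ℝ → ℝ²} (hinj : InjLoop γ) (hc : Continuous γ)
    (hp : Periodic γ 1) {δ : ℝ} (hδ : 0 < δ) :
    ∃ m > 0, ∀ t r, δ ≤ r → r ≤ 1 - δ → m ≤ dist (γ t) (γ (t + r)) := by
  have hK : IsCompact (Icc (0 : ℝ) 1 ×ˢ Icc δ (1 - δ)) := isCompact_Icc.prod isCompact_Icc
  obtain ⟨m, hm, hmin⟩ := hK.exists_forall_le' (a := 0)
    (f := fun p : ℝ × ℝ => dist (γ p.1) (γ (p.1 + p.2))) (by fun_prop) fun p hp =>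
      dist_pos.2 (hinj.apply_add_ne p.1 (by linarith [hp.2.1]) (by linarith [hp.2.2])).symm
  refine ⟨m, hm, fun t r hr₀ hr₁ => ?_⟩
  have hpr : Periodic (fun t => dist (γ t) (γ (t + r))) 1 := fun t => by
    simp only [add_right_comm t 1 r, hp _]
  obtain ⟨t₀, ht₀, heq⟩ := hpr.exists_mem_Ico₀ one_pos t
  exact heq ▸ hmin (t₀, r) ⟨Ico_subset_Icc_self ht₀, hr₀, hr₁⟩

theorem InGamma.dist_le_dC1 {γ₁ γ₂ : ℝ → ℝ²} (h₁ : InGamma γ₁) (h₂ : InGamma γ₂) (t : ℝ) :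
    dist (γ₁ t) (γ₂ t) ≤ dC1 γ₁ γ₂ := by
  have hsup := h₁.2.dist_le_iSup_dist h₂.2 one_ne_zero h₁.1.continuous h₂.1.continuous t
  have hnonneg : 0 ≤ ⨆ t, dist (deriv γ₁ t) (deriv γ₂ t) := Real.iSup_nonneg fun _ => dist_nonneg
  rw [dC1]
  linarith

theorem InGamma.dist_deriv_le_dC1 {γ₁ γ₂ : ℝ → ℝ²} (h₁ : InGamma γ₁) (h₂ : InGamma γ₂) (t : ℝ) :
    dist (deriv γ₁ t) (deriv γ₂ t) ≤ dC1 γ₁ γ₂ := by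
  have hsup := h₁.2.deriv.dist_le_iSup_dist h₂.2.deriv one_ne_zero
    (h₁.1.continuous_deriv le_rfl) (h₂.1.continuous_deriv le_rfl) t
  have hnonneg : 0 ≤ ⨆ t, dist (γ₁ t) (γ₂ t) := Real.iSup_nonneg fun _ => dist_nonneg
  rw [dC1]
  linarith

/-- The set of injective unit-speed `C¹` loops is open in `N` for the `C¹` topology:
any loop `C¹`-close enough to an injective one is injective. -/
theorem stmt5 (γ : ℝ → EuclideanSpace ℝ (Fin 2)) (hγ : InN γ) (hinj : InjLoop γ) :
    ∃ ε : ℝ, 0 < ε ∧ ∀ γ' : ℝ → EuclideanSpace ℝ (Fin 2),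
      InN γ' → dC1 γ' γ < ε → InjLoop γ' := by
  obtain ⟨⟨hc, hp⟩, hunit⟩ := hγ
  obtain ⟨δ, hδ, hlocal⟩ := exists_pos_apply_ne_of_dist_deriv_le
    (hp.deriv.uniformContinuous_of_continuous one_pos (hc.continuous_deriv le_rfl)) hunit
  obtain ⟨m, hm, hfar⟩ := hinj.exists_pos_le_dist hc.continuous hp hδ
  refine ⟨min (1 / 4) (m / 2), by positivity, fun γ' ⟨hγ', _⟩ hdist => ?_⟩
  have hclose : ∀ t, dist (γ' t) (γ t) < m / 2 := fun t =>
    ((hγ'.dist_le_dC1 ⟨hc, hp⟩ t).trans_lt hdist).trans_le (min_le_right _ _)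
  have hclose' : ∀ t, dist (deriv γ' t) (deriv γ t) ≤ 1 / 4 := fun t =>
    ((hγ'.dist_deriv_le_dC1 ⟨hc, hp⟩ t).trans hdist.le).trans (min_le_left _ _)
  have hdiff : Differentiable ℝ γ' := hγ'.1.differentiable one_ne_zero
  refine injLoop_of_apply_add_ne hγ'.2 fun t r hr₀ hr₁ heq => ?_
  rcases le_or_gt r δ with hr | hr
  · exact hlocal γ' hdiff hclose' t (t + r) (by linarith) (by linarith) heq
  rcases le_or_gt (1 - δ) r with hr' | hr'
  · exact hlocal γ' hdiff hclose' (t + r) (t + 1) (by linarith) (by linarith) (heq ▸ hγ'.2 t)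
  · have hsmall : dist (γ t) (γ (t + r)) < m :=
      calc dist (γ t) (γ (t + r)) ≤ dist (γ t) (γ' t) + dist (γ' (t + r)) (γ (t + r)) := by
            rw [heq]; exact dist_triangle _ _ _
        _ < m / 2 + m / 2 := add_lt_add (dist_comm (γ t) (γ' t) ▸ hclose t) (hclose (t + r))
        _ = m := add_halves m
    exact hsmall.not_ge (hfar t r hr.le hr'.le)
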